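/- Let a < b and u ∈ C²([a,b]) with 0 ≤ u ≤ 1/4, and suppose the total phase-field energy E := ∫_a^b ((ε/2)u'² + (1/ε)F(u)) dx + (σ/(2ε)) ∫_a^b (εu'' - (1/ε)F'(u))² dx is finite with σ > 0. Then for every x ∈ [a,b], |ε²u'(x)² - 2F(u(x))| ≤ 2(ε/(b-a) + 2ε/√σ) · E. -/

import Mathlib

/-!
Write `ξ = ε²u'² - 2F(u)` (the discrepancy) and `μ = εu'' - F'(u)/ε`, so that `ξ' = 2εu'μ` and
`E = ∫ e` with `e = (ε/2)u'² + F(u)/ε + (σ/2ε)μ²`. As `F(u) ≥ 0`, pointwise `|ξ| ≤ 2εe`, and by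
AM-GM `|ξ'| ≤ 2(ε|u'|)(√σ|μ|)/√σ ≤ (ε²u'² + σμ²)/√σ ≤ 2εe/√σ`. So at a point `y` where `|ξ|` is
minimal `|ξ y| ≤ 2εE/(b-a)`, while `|ξ x - ξ y| ≤ ∫ |ξ'| ≤ 2εE/√σ`.
-/

open MeasureTheory Set

section IntervalCalculus

variable {f f' : ℝ → ℝ} {a b : ℝ}

theorem abs_sub_le_integral_abs_deriv (hf : ∀ z ∈ Icc a b, HasDerivAt f (f' z) z)
    (hf' : IntervalIntegrable f' volume a b) {x y : ℝ} (hx : x ∈ Icc a b) (hy : y ∈ Icc a b) :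
    |f x - f y| ≤ ∫ z in a..b, |f' z| := by
  wlog hyx : y ≤ x generalizing x y
  · rw [abs_sub_comm]
    exact this hy hx (le_of_not_ge hyx)
  have hsub : uIcc y x ⊆ Icc a b := uIcc_subset_Icc hy hx
  rw [← intervalIntegral.integral_eq_sub_of_hasDerivAt (fun z hz => hf z (hsub hz))
    (hf'.mono_set (hsub.trans Icc_subset_uIcc))]
  calc |∫ z in y..x, f' z| ≤ ∫ z in y..x, |f' z| :=
        intervalIntegral.abs_integral_le_integral_abs hyx
    _ ≤ ∫ z in a..b, |f' z| :=
      intervalIntegral.integral_mono_interval hy.1 hyx hx.2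
        (Filter.Eventually.of_forall fun _ => abs_nonneg _) hf'.abs

theorem exists_mul_le_integral_abs (hab : a < b) (hf : ContinuousOn f (Icc a b)) :
    ∃ y ∈ Icc a b, |f y| * (b - a) ≤ ∫ z in a..b, |f z| := by
  obtain ⟨y, hy, hmin⟩ := isCompact_Icc.exists_isMinOn (nonempty_Icc.mpr hab.le) hf.abs
  refine ⟨y, hy, ?_⟩
  have := intervalIntegral.integral_mono_on hab.le (intervalIntegrable_const (μ := volume))
    (hf.abs.intervalIntegrable_of_Icc hab.le) fun z hz => hmin hz
  simpa [mul_comm] using this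

theorem abs_le_integral_abs_div_add_integral_abs_deriv (hab : a < b)
    (hf : ∀ z ∈ Icc a b, HasDerivAt f (f' z) z) (hf' : IntervalIntegrable f' volume a b)
    {x : ℝ} (hx : x ∈ Icc a b) :
    |f x| ≤ (∫ z in a..b, |f z|) / (b - a) + ∫ z in a..b, |f' z| := by
  obtain ⟨y, hy, hmean⟩ := exists_mul_le_integral_abs hab
    fun z hz => (hf z hz).continuousAt.continuousWithinAt
  have hy' : |f y| ≤ (∫ z in a..b, |f z|) / (b - a) := by
    rwa [le_div_iff₀ (sub_pos.mpr hab)]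
  linarith [abs_sub_abs_le_abs_sub (f x) (f y), abs_sub_le_integral_abs_deriv hf hf' hx hy]

theorem integral_abs_le_mul_integral_of_abs_le {g e : ℝ → ℝ} {c : ℝ} (hab : a ≤ b)
    (hg : IntervalIntegrable g volume a b) (he : IntervalIntegrable e volume a b)
    (h : ∀ z ∈ Icc a b, |g z| ≤ c * e z) :
    ∫ z in a..b, |g z| ≤ c * ∫ z in a..b, e z := by
  rw [← intervalIntegral.integral_const_mul]
  exact intervalIntegral.integral_mono_on hab hg.abs (he.const_mul c) h

end IntervalCalculus

noncomputable section PhaseField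

variable (ε σ : ℝ) (u F : ℝ → ℝ)

def discrepancy (x : ℝ) : ℝ := ε ^ 2 * deriv u x ^ 2 - 2 * F (u x)

def chemicalPotential (x : ℝ) : ℝ := ε * iteratedDeriv 2 u x - (1 / ε) * deriv F (u x)

def energyDensity (x : ℝ) : ℝ :=
  (ε / 2) * deriv u x ^ 2 + (1 / ε) * F (u x) + (σ / (2 * ε)) * chemicalPotential ε u F x ^ 2

variable {ε σ u F}

theorem hasDerivAt_discrepancy (hε : ε ≠ 0) (hu : ContDiff ℝ 2 u) (hF : Differentiable ℝ F)
    (x : ℝ) :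
    HasDerivAt (discrepancy ε u F) (2 * ε * deriv u x * chemicalPotential ε u F x) x := by
  have hsq := ((hu.differentiable_deriv_two x).hasDerivAt.fun_pow 2).const_mul (ε ^ 2)
  have hFu :=
    ((hF (u x)).hasDerivAt.comp x (hu.differentiable two_ne_zero x).hasDerivAt).const_mul 2
  refine (hsq.fun_sub hFu).congr_deriv ?_
  simp only [chemicalPotential, iteratedDeriv_succ, iteratedDeriv_zero]
  field_simp
  ring

theorem continuous_chemicalPotential (hu : ContDiff ℝ 2 u) (hF : ContDiff ℝ 1 F) :
    Continuous (chemicalPotential ε u F) := by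
  have hu'' : Continuous (iteratedDeriv 2 u) := hu.continuous_iteratedDeriv 2 le_rfl
  have hF' : Continuous (deriv F) := hF.continuous_deriv le_rfl
  exact (continuous_const.mul hu'').sub
    (continuous_const.mul (hF'.comp hu.continuous))

theorem continuous_energyDensity (hu : ContDiff ℝ 2 u) (hF : ContDiff ℝ 1 F) :
    Continuous (energyDensity ε σ u F) := by
  have hu' : Continuous (deriv u) := hu.continuous_deriv one_le_two
  have hμ := continuous_chemicalPotential (ε := ε) hu hF
  unfold energyDensity
  fun_prop

theorem energyDensity_nonneg (hε : 0 < ε) (hσ : 0 ≤ σ) {x : ℝ} (hFx : 0 ≤ F (u x)) :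
    0 ≤ energyDensity ε σ u F x := by
  unfold energyDensity
  positivity

theorem abs_discrepancy_le_energyDensity (hε : 0 < ε) (hσ : 0 ≤ σ) {x : ℝ} (hFx : 0 ≤ F (u x)) :
    |discrepancy ε u F x| ≤ 2 * ε * energyDensity ε σ u F x := by
  have hμ : 0 ≤ σ * chemicalPotential ε u F x ^ 2 := by positivity
  have h2εe : 2 * ε * energyDensity ε σ u F x
      = ε ^ 2 * deriv u x ^ 2 + 2 * F (u x) + σ * chemicalPotential ε u F x ^ 2 := by
    unfold energyDensity; field_simp
  rw [h2εe, discrepancy, abs_le]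
  constructor <;> nlinarith [sq_nonneg (ε * deriv u x)]

theorem abs_deriv_discrepancy_le_energyDensity (hε : 0 < ε) (hσ : 0 < σ) {x : ℝ}
    (hFx : 0 ≤ F (u x)) :
    |2 * ε * deriv u x * chemicalPotential ε u F x| ≤
      2 * ε / √σ * energyDensity ε σ u F x := by
  set p := deriv u x
  set q := chemicalPotential ε u F x
  have hs : 0 < √σ := Real.sqrt_pos.mpr hσ
  have hamgm : 2 * (ε * |p|) * (√σ * |q|) ≤ ε ^ 2 * p ^ 2 + σ * q ^ 2 := by
    have := two_mul_le_add_sq (ε * |p|) (√σ * |q|)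
    rwa [mul_pow, mul_pow, sq_abs, sq_abs, Real.sq_sqrt hσ.le] at this
  have h2εe : 2 * ε * energyDensity ε σ u F x = ε ^ 2 * p ^ 2 + 2 * F (u x) + σ * q ^ 2 := by
    simp only [energyDensity, p, q]; field_simp
  rw [div_mul_eq_mul_div, le_div_iff₀ hs, mul_assoc, h2εe, abs_mul, abs_mul, abs_mul,
    abs_two, abs_of_pos hε]
  nlinarith

variable {a b : ℝ}

theorem integral_energyDensity (hu : ContDiff ℝ 2 u) (hF : ContDiff ℝ 1 F) :
    ∫ z in a..b, energyDensity ε σ u F z =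
      (∫ z in a..b, ((ε / 2) * deriv u z ^ 2 + (1 / ε) * F (u z))) +
        (σ / (2 * ε)) * ∫ z in a..b, chemicalPotential ε u F z ^ 2 := by
  have hu' : Continuous (deriv u) := hu.continuous_deriv one_le_two
  have hFc : Continuous F := hF.continuous
  have hμ := continuous_chemicalPotential (ε := ε) hu hF
  rw [← intervalIntegral.integral_const_mul, ← intervalIntegral.integral_add]
  · rfl
  · exact (by fun_prop : Continuous _).intervalIntegrable a b
  · exact (by fun_prop : Continuous _).intervalIntegrable a b

theorem abs_discrepancy_le_integral_energyDensity (hab : a < b) (hε : 0 < ε) (hσ : 0 < σ)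
    (hu : ContDiff ℝ 2 u) (hF : ContDiff ℝ 1 F) (hFu : ∀ z ∈ Icc a b, 0 ≤ F (u z))
    {x : ℝ} (hx : x ∈ Icc a b) :
    |discrepancy ε u F x| ≤
      2 * ε / (b - a) * (∫ z in a..b, energyDensity ε σ u F z) +
        2 * ε / √σ * ∫ z in a..b, energyDensity ε σ u F z := by
  have hu' : Continuous (deriv u) := hu.continuous_deriv one_le_two
  have hμ := continuous_chemicalPotential (ε := ε) hu hF
  have he : IntervalIntegrable (energyDensity ε σ u F) volume a b :=
    (continuous_energyDensity hu hF).intervalIntegrable a b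
  have hξ := hasDerivAt_discrepancy hε.ne' hu (hF.differentiable one_ne_zero)
  have hξ_int : IntervalIntegrable (discrepancy ε u F) volume a b :=
    (continuous_iff_continuousAt.2 fun z => (hξ z).continuousAt).intervalIntegrable a b
  have hξ'_int : IntervalIntegrable (fun z => 2 * ε * deriv u z * chemicalPotential ε u F z)
      volume a b := (by fun_prop : Continuous _).intervalIntegrable a b
  have hmean := integral_abs_le_mul_integral_of_abs_le hab.le hξ_int he
    fun z hz => abs_discrepancy_le_energyDensity hε hσ.le (hFu z hz)
  have hvar := integral_abs_le_mul_integral_of_abs_le hab.le hξ'_int he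
    fun z hz => abs_deriv_discrepancy_le_energyDensity hε hσ (hFu z hz)
  calc |discrepancy ε u F x|
      ≤ (∫ z in a..b, |discrepancy ε u F z|) / (b - a) +
          ∫ z in a..b, |2 * ε * deriv u z * chemicalPotential ε u F z| :=
        abs_le_integral_abs_div_add_integral_abs_deriv hab (fun z _ => hξ z) hξ'_int hx
    _ ≤ 2 * ε * (∫ z in a..b, energyDensity ε σ u F z) / (b - a) +
          2 * ε / √σ * ∫ z in a..b, energyDensity ε σ u F z := by
      gcongr
    _ = _ := by ring

end PhaseField

theorem stmt11 (a b ε σ : ℝ) (hab : a < b) (hε : 0 < ε) (hσ : 0 < σ)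
    (u F : ℝ → ℝ) (hu : ContDiff ℝ 2 u)
    (hrange : ∀ x ∈ Set.Icc a b, u x ∈ Set.Icc (0:ℝ) (1/4))
    (hF : ∀ s, F s = s^2/2 - 2*s^3)
    (E : ℝ)
    (hE : E = (∫ x in a..b, ((ε/2) * (deriv u x)^2 + (1/ε) * F (u x))) +
      (σ/(2*ε)) * ∫ x in a..b, (ε * iteratedDeriv 2 u x - (1/ε) * deriv F (u x))^2) :
    ∀ x ∈ Set.Icc a b,
      |ε^2 * (deriv u x)^2 - 2 * F (u x)| ≤
        2 * (ε/(b - a) + 2*ε/Real.sqrt σ) * E := by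
  intro x hx
  have hF1 : ContDiff ℝ 1 F := by rw [funext hF]; fun_prop
  have hFu : ∀ z ∈ Icc a b, 0 ≤ F (u z) := fun z hz => by
    obtain ⟨h0, h1⟩ := hrange z hz
    rw [hF]
    nlinarith
  have hE' : E = ∫ z in a..b, energyDensity ε σ u F z := by
    rw [hE, integral_energyDensity hu hF1]
    rfl
  have hE0 : 0 ≤ E := hE' ▸ intervalIntegral.integral_nonneg hab.le fun z hz =>
    energyDensity_nonneg hε hσ.le (hFu z hz)
  have hεE : 0 ≤ ε / √σ * E := by positivity
  have key := abs_discrepancy_le_integral_energyDensity hab hε hσ hu hF1 hFu hx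
  rw [← hE'] at key
  calc |discrepancy ε u F x| ≤ 2 * ε / (b - a) * E + 2 * ε / √σ * E := key
    _ ≤ 2 * (ε / (b - a) + 2 * ε / √σ) * E := by
      have hsplit : 2 * (ε / (b - a) + 2 * ε / √σ) * E =
          2 * ε / (b - a) * E + 2 * ε / √σ * E + 2 * (ε / √σ * E) := by ring
      linarith
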